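/- arXiv:1505.04776 — 5 statements merged into one kernel-verified Lean document; each statement's English description precedes it below -/
import Mathlib

section
/- Let X be a Banach space and F a closed convex subset of the dual unit ball B_{X*} with the weak* topology. Then F does not admit a family (V_α)_{α<ω₁} of open subsets of F, indexed by the first uncountable ordinal, such that closure(V_α) ⊆ V_β whenever α < β < ω₁ and the family is strictly increasing. -/
/-!
Let `U` be the union of the chain. Since `ω₁` has uncountable cofinality, a sequence in `U` lies in
a single `V α`, so its limit lies in `closure (V α) ⊆ V (α + 1)`; hence `U` is sequentially
closed, and its trace on any path, being open and closed in `[0, 1]`, is all or nothing. A convex `F` is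
path connected, so `U = F`. But `F` is weak*-compact by Banach–Alaoglu, so the increasing open
cover `(V α)` of `F` has a finite, hence a single, member `V α = F`, contradicting `V α ⊂ V (α + 1)`.
-/

open Cardinal Set Order

section OrdinalChain

variable {Z : Type*} [TopologicalSpace Z] {o : Ordinal} {W : Ordinal → Set Z}

theorem isClosed_biUnion_of_closure_subset [SequentialSpace Z] (ho : ℵ₀ < o.cof)
    (hW : ∀ α β, α < β → β < o → closure (W α) ⊆ W β) : IsClosed (⋃ α < o, W α) := by
  have hlim : IsSuccLimit o := Ordinal.one_lt_cof_iff.mp (one_lt_aleph0.trans ho)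
  refine IsSeqClosed.isClosed fun x t hx hxt => ?_
  choose β hβ hxβ using fun n => mem_iUnion₂.mp (hx n)
  have hγ : ⨆ n, β n < o := Ordinal.lift_iSup_lt_of_lt_cof (by simpa using ho) hβ
  have hγ₁ := hlim.succ_lt hγ
  have hxγ : ∀ n, x n ∈ W (succ (⨆ n, β n)) := fun n =>
    hW _ _ (lt_succ_of_le (Ordinal.le_iSup β n)) hγ₁ (subset_closure (hxβ n))
  exact mem_biUnion (hlim.succ_lt hγ₁)
    (hW _ _ (lt_succ _) (hlim.succ_lt hγ₁) (mem_closure_of_tendsto hxt (.of_forall hxγ)))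

theorem biUnion_eq_univ_of_closure_subset [PathConnectedSpace Z] (ho : ℵ₀ < o.cof)
    (hopen : ∀ α < o, IsOpen (W α)) (hW : ∀ α β, α < β → β < o → closure (W α) ⊆ W β)
    (hne : (⋃ α < o, W α).Nonempty) : ⋃ α < o, W α = Set.univ := by
  obtain ⟨x, hx⟩ := hne
  refine eq_univ_of_forall fun y => ?_
  let γ := PathConnectedSpace.somePath x y
  have hclopen : IsClopen (γ ⁻¹' ⋃ α < o, W α) := by
    rw [preimage_iUnion₂]
    refine ⟨isClosed_biUnion_of_closure_subset ho fun α β hαβ hβ => ?_,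
      isOpen_biUnion fun α hα => (hopen α hα).preimage γ.continuous⟩
    exact (γ.continuous.closure_preimage_subset _).trans (preimage_mono (hW α β hαβ hβ))
  have h1 : (1 : unitInterval) ∈ γ ⁻¹' ⋃ α < o, W α :=
    (hclopen.eq_univ ⟨0, by simpa using hx⟩).symm ▸ mem_univ 1
  simpa using h1

theorem biUnion_ne_univ_of_ssubset [CompactSpace Z] (ho : IsSuccLimit o)
    (hopen : ∀ α < o, IsOpen (W α)) (hW : ∀ α β, α < β → β < o → W α ⊂ W β) :
    ⋃ α < o, W α ≠ Set.univ := by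
  intro hcover
  have hmono : Monotone fun i : Iio o => W i := fun i j hij =>
    hij.eq_or_lt.elim (fun h => h ▸ subset_rfl) fun h => (hW _ _ h j.2).subset
  have : Nonempty (Iio o) := ⟨⟨0, ho.bot_lt⟩⟩
  obtain ⟨i, hi⟩ := isCompact_univ.elim_directed_cover (fun i : Iio o => W i)
    (fun i => hopen i i.2) (by simpa [iUnion_subtype] using hcover.ge) hmono.directed_le
  exact (hW i _ (lt_succ i.1) (ho.succ_lt i.2)).not_subset (hi.trans' (subset_univ _))

end OrdinalChain

theorem stmt6_general {X : Type*} [NormedAddCommGroup X] [NormedSpace ℝ X]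
    (F : Set (WeakDual ℝ X))
    (hFB : F ⊆ {φ : WeakDual ℝ X | ‖WeakDual.toStrongDual φ‖ ≤ 1})
    (hFclosed : IsClosed F) (hFconv : Convex ℝ F) :
    ¬ ∃ V : Ordinal → Set F,
      (∀ α < (aleph 1).ord, IsOpen (V α)) ∧
      (∀ α β : Ordinal, α < β → β < (aleph 1).ord → closure (V α) ⊆ V β) ∧
      (∀ α β : Ordinal, α < β → β < (aleph 1).ord → V α ⊂ V β) := by
  rintro ⟨V, hopen, hclos, hssub⟩
  have hcof : ℵ₀ < (aleph 1).ord.cof := by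
    rw [isRegular_aleph_one.cof_ord]
    exact aleph0_lt_aleph_one
  have hlim : IsSuccLimit (aleph 1).ord := isSuccLimit_ord (aleph0_le_aleph 1)
  have : CompactSpace F := isCompact_iff_compactSpace.mp <|
    (WeakDual.isCompact_closedBall 0 1).of_isClosed_subset hFclosed fun φ hφ => by
      simpa using hFB hφ
  have h1 : 1 < (aleph 1).ord := by simpa using hlim.succ_lt hlim.bot_lt
  obtain ⟨p, hp, -⟩ := exists_of_ssubset (hssub 0 1 zero_lt_one h1)
  have : PathConnectedSpace F :=
    isPathConnected_iff_pathConnectedSpace.mp (hFconv.isPathConnected ⟨p, p.2⟩)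
  exact biUnion_ne_univ_of_ssubset hlim hopen hssub <|
    biUnion_eq_univ_of_closure_subset hcof hopen hclos ⟨p, mem_biUnion h1 hp⟩

/-- Proposition 3.1: a closed convex subset `F` of the dual unit ball of a Banach space
with the weak* topology admits no strictly increasing ω₁-chain `(V_α)_{α<ω₁}` of open
subsets of `F` with `closure (V_α) ⊆ V_β` for `α < β < ω₁`. -/
theorem stmt6 {X : Type*} [NormedAddCommGroup X] [NormedSpace ℝ X] [CompleteSpace X]
    (F : Set (WeakDual ℝ X))
    (hFB : F ⊆ {φ : WeakDual ℝ X | ‖WeakDual.toStrongDual φ‖ ≤ 1})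
    (hFclosed : IsClosed F) (hFconv : Convex ℝ F) :
    ¬ ∃ V : Ordinal → Set F,
      (∀ α < (aleph 1).ord, IsOpen (V α)) ∧
      (∀ α β : Ordinal, α < β → β < (aleph 1).ord → closure (V α) ⊆ V β) ∧
      (∀ α β : Ordinal, α < β → β < (aleph 1).ord → V α ⊂ V β) :=
  stmt6_general F hFB hFclosed hFconv
end

section
/- Every Banach space X has countable tightness in its weak topology: if A ⊆ X and x is in the weak closure of A, then there is a countable subset D ⊆ A with x in the weak closure of D. -/
/-!
For fixed `n` and `m`, the `n`-tuples of functionals of norm at most `m` form a weak-* compact set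
(Banach–Alaoglu). If `x` is in the weak closure of `A`, this set is covered by the weak-* open sets
`{g | ∀ i, ‖gᵢ (a - x)‖ < 1}`, `a ∈ A`, so finitely many `a` suffice. The countable union over
`n` and `m` of these finite sets meets every basic weak neighbourhood of `x`, since after
rescaling such a neighbourhood is given by some tuple of bounded norm and tolerance `1`.
-/

open Metric Set

namespace WeakSpace

variable {𝕜 X : Type*} [RCLike 𝕜] [NormedAddCommGroup X] [NormedSpace 𝕜 X]

theorem mem_closure_iff_forall_fin {S : Set (WeakSpace 𝕜 X)} {x : WeakSpace 𝕜 X} :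
    x ∈ closure S ↔
      ∀ (n : ℕ) (g : Fin n → StrongDual 𝕜 X), ∃ a ∈ S, ∀ i, ‖g i (a - x)‖ < 1 := by
  classical
  refine (mem_closure_iff_nhds_basis
    (topDualPairing 𝕜 X).flip.weakBilin_withSeminorms.hasBasis_ball).trans ⟨?_, ?_⟩
  · intro h n g
    obtain ⟨a, haS, ha⟩ := h (Finset.univ.image g, 1) one_pos
    exact ⟨a, haS, fun i =>
      (Seminorm.le_finset_sup_apply (Finset.mem_image_of_mem g (Finset.mem_univ i))).trans_lt ha⟩
  · rintro h ⟨F, r⟩ (hr : 0 < r)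
    obtain ⟨n, e, he⟩ := F.finite_toSet.fin_embedding
    obtain ⟨a, haS, ha⟩ := h n fun i => (r⁻¹ : 𝕜) • e i
    refine ⟨a, haS, Seminorm.finset_sup_apply_lt hr fun f hf => ?_⟩
    obtain ⟨i, rfl⟩ : f ∈ range e := he ▸ hf
    -- stated for `y : X`: rewriting fails on `a - x`, whose type is the synonym `WeakSpace 𝕜 X`
    have rescale (y : X) (hy : ‖((r⁻¹ : 𝕜) • e i) y‖ < 1) : ‖e i y‖ < r := by
      rwa [smul_apply, norm_smul, norm_inv, RCLike.norm_ofReal, abs_of_pos hr,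
        inv_mul_lt_one₀ hr] at hy
    exact rescale _ (ha i)

theorem exists_finite_forall_of_isCompact {A : Set (WeakSpace 𝕜 X)} {x : WeakSpace 𝕜 X}
    (hx : x ∈ closure A) {n : ℕ} {K : Set (Fin n → WeakDual 𝕜 X)} (hK : IsCompact K) :
    ∃ T ⊆ A, T.Finite ∧ ∀ g ∈ K, ∃ a ∈ T, ∀ i, ‖g i (a - x)‖ < 1 := by
  have hopen (a : WeakSpace 𝕜 X) : IsOpen {g : Fin n → WeakDual 𝕜 X | ∀ i, ‖g i (a - x)‖ < 1} := by
    simp only [ofPred_forall]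
    exact isOpen_iInter_of_finite fun i =>
      isOpen_lt (((WeakDual.eval_continuous _).comp (continuous_apply i)).norm) continuous_const
  have hcover : K ⊆ ⋃ a ∈ A, {g | ∀ i, ‖g i (a - x)‖ < 1} := fun g _ => by
    obtain ⟨a, haA, ha⟩ := mem_closure_iff_forall_fin.1 hx n fun i => WeakDual.toStrongDual (g i)
    exact mem_biUnion haA ha
  obtain ⟨T, hTA, hT, hKT⟩ := hK.elim_finite_subcover_image (fun a _ => hopen a) hcover
  refine ⟨T, hTA, hT, fun g hg => ?_⟩
  simpa only [mem_iUnion₂, exists_prop, mem_ofPred_eq] using hKT hg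

theorem exists_countable_subset_mem_closure {A : Set (WeakSpace 𝕜 X)} {x : WeakSpace 𝕜 X}
    (hx : x ∈ closure A) : ∃ D ⊆ A, D.Countable ∧ x ∈ closure D := by
  have hball (m : ℕ) : IsCompact (WeakDual.toStrongDual ⁻¹' closedBall (0 : StrongDual 𝕜 X) m) :=
    WeakDual.isCompact_closedBall 0 m
  choose T hTA hT hTK using fun n m : ℕ =>
    exists_finite_forall_of_isCompact hx (isCompact_univ_pi fun _ : Fin n => hball m)
  refine ⟨⋃ (n) (m), T n m, iUnion₂_subset hTA, countable_iUnion fun n =>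
    countable_iUnion fun m => (hT n m).countable, mem_closure_iff_forall_fin.2 fun n g => ?_⟩
  obtain ⟨m, hm⟩ := Finite.exists_le fun i => ⌈‖g i‖⌉₊
  obtain ⟨a, haT, ha⟩ := hTK n m (fun i => StrongDual.toWeakDual (g i)) fun i _ => by
    simpa using (Nat.le_ceil _).trans (Nat.cast_le.2 (hm i))
  exact ⟨a, mem_iUnion₂.2 ⟨n, m, haT⟩, ha⟩

end WeakSpace

theorem stmt7_general {X : Type*} [NormedAddCommGroup X] [NormedSpace ℝ X]
    (A : Set (WeakSpace ℝ X)) (x : WeakSpace ℝ X) (hx : x ∈ closure A) :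
    ∃ D ⊆ A, D.Countable ∧ x ∈ closure D :=
  WeakSpace.exists_countable_subset_mem_closure hx

/-- Kaplansky's theorem: every Banach space has countable tightness in its weak
topology: if `x` lies in the weak closure of `A`, then `x` lies in the weak closure
of some countable subset of `A`. -/
theorem stmt7 {X : Type*} [NormedAddCommGroup X] [NormedSpace ℝ X] [CompleteSpace X]
    (A : Set (WeakSpace ℝ X)) (x : WeakSpace ℝ X) (hx : x ∈ closure A) :
    ∃ D ⊆ A, D.Countable ∧ x ∈ closure D :=
  stmt7_general A x hx
end

section
/- If X is a Banach space of density character κ, then there exists a strictly increasing well-ordered chain (U_ξ)_{ξ<κ} of open subsets of the dual unit ball B_{X*} with the weak* topology. -/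
/-!
For uncountable `κ`, enumerate `X` along a well-order as `(x i)` and keep the indices `i` for
which `x i` is not in the closed span of the earlier vectors. The kept vectors still have dense
span, so their rational combinations are dense, and hence at least `κ` indices are kept.
Hahn–Banach gives for each kept `i` a functional `φ i` in the dual unit ball that vanishes on the
earlier vectors but not on `x i`; the weak* open sets `⋃ j < i, {ψ | 0 < ψ (x j)}` then increase
strictly, as witnessed by the `φ i`. For `κ ≤ ℵ₀` the multiples `(n + 1)⁻¹ • g` of one norming
functional `g` play the role of the `φ n`.
-/

open Cardinal Set Submodule

universe u

def HasStrictOpenChain (Y : Type*) [TopologicalSpace Y] (o : Ordinal) : Prop :=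
  ∃ U : Ordinal → Set Y, (∀ ξ < o, IsOpen (U ξ)) ∧ ∀ ξ ζ : Ordinal, ξ < ζ → ζ < o → U ξ ⊂ U ζ

section Chains

variable {Y : Type*}

theorem hasStrictOpenChain_of_le_one [TopologicalSpace Y] {o : Ordinal} (ho : o ≤ 1) :
    HasStrictOpenChain Y o := by
  refine ⟨fun _ => ∅, fun _ _ => isOpen_empty, fun ξ ζ hξζ hζ => ?_⟩
  rw [Order.lt_one_iff.1 (hζ.trans_le ho)] at hξζ
  exact (not_lt_zero hξζ).elim

theorem strictMono_biUnion_Iio {ι : Type*} [Preorder ι] {y : ι → Y} {V : ι → Set Y}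
    (hyV : ∀ i, y i ∈ V i) (hsep : ∀ ⦃i j⦄, j < i → y i ∉ V j) :
    StrictMono fun i => ⋃ j ∈ Iio i, V j := by
  intro i k hik
  refine (ssubset_iff_of_subset (biUnion_subset_biUnion_left (Iio_subset_Iio hik.le))).2
    ⟨y i, mem_biUnion hik (hyV i), ?_⟩
  simpa only [mem_iUnion₂, not_exists] using fun j (hji : j ∈ Iio i) => hsep hji

theorem hasStrictOpenChain_ord_of_strictMono [TopologicalSpace Y] {ι : Type u} [LinearOrder ι]
    [WellFoundedLT ι] {κ : Cardinal.{u}} (hκ : κ ≤ #ι) {W : ι → Set Y}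
    (hW : ∀ i, IsOpen (W i)) (hW_mono : StrictMono W) : HasStrictOpenChain Y κ.ord := by
  have hle : κ.ord ≤ Ordinal.type ((· < ·) : ι → ι → Prop) :=
    ord_le.2 (by rwa [Ordinal.card_type])
  let e (ξ : Ordinal) (h : ξ < κ.ord) : ι := Ordinal.enum (· < ·) ⟨ξ, h.trans_le hle⟩
  refine ⟨fun ξ => if h : ξ < κ.ord then W (e ξ h) else ∅, fun ξ hξ => ?_, fun ξ ζ hξζ hζ => ?_⟩
  · simpa only [dif_pos hξ] using hW _
  · simp only [dif_pos (hξζ.trans hζ), dif_pos hζ]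
    exact hW_mono (Ordinal.enum_lt_enum.2 hξζ)

end Chains

section RatCombinations

variable {X : Type u} [AddCommMonoid X] [Module ℝ X]

def ratCombinations (S : Set X) : Set X :=
  range fun L : List (ℚ × S) => (L.map fun p => (p.1 : ℝ) • (p.2 : X)).sum

variable {S : Set X} {a b : X}

theorem mk_ratCombinations_le (S : Set X) : #(ratCombinations S) ≤ max ℵ₀ #S := by
  refine mk_range_le.trans ((mk_list_le_max _).trans (max_le (le_max_left _ _) ?_))
  simpa [mk_prod] using mul_le_max_of_aleph0_le_left (b := #S) le_rfl

theorem subset_ratCombinations : S ⊆ ratCombinations S :=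
  fun s hs => ⟨[(1, ⟨s, hs⟩)], by simp⟩

theorem zero_mem_ratCombinations : (0 : X) ∈ ratCombinations S := ⟨[], rfl⟩

theorem add_mem_ratCombinations (ha : a ∈ ratCombinations S) (hb : b ∈ ratCombinations S) :
    a + b ∈ ratCombinations S := by
  obtain ⟨L₁, rfl⟩ := ha
  obtain ⟨L₂, rfl⟩ := hb
  exact ⟨L₁ ++ L₂, by simp⟩

theorem ratCast_smul_mem_ratCombinations (q : ℚ) (ha : a ∈ ratCombinations S) :
    (q : ℝ) • a ∈ ratCombinations S := by
  obtain ⟨L, rfl⟩ := ha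
  exact ⟨L.map fun p => (q * p.1, p.2), by simp [List.smul_sum, mul_smul, Function.comp_def]⟩

theorem span_subset_closure_ratCombinations [TopologicalSpace X] [ContinuousAdd X]
    [ContinuousSMul ℝ X] (S : Set X) :
    (span ℝ S : Set X) ⊆ closure (ratCombinations S) := by
  intro x hx
  induction hx using Submodule.span_induction with
  | mem x hx => exact subset_closure (subset_ratCombinations hx)
  | zero => exact subset_closure zero_mem_ratCombinations
  | add a b _ _ ha hb =>
    exact map_mem_closure₂ continuous_add ha hb fun _ h₁ _ h₂ => add_mem_ratCombinations h₁ h₂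
  | smul c a _ ha =>
    refine map_mem_closure₂ continuous_smul (Rat.denseRange_cast c) ha ?_
    rintro _ ⟨q, rfl⟩ b hb
    exact ratCast_smul_mem_ratCombinations q hb

end RatCombinations

section NewIndices

variable (R : Type*) {X ι : Type*} [Semiring R] [AddCommMonoid X] [Module R X] [TopologicalSpace X]
  [ContinuousAdd X] [ContinuousConstSMul R X] [LinearOrder ι]

def newIndices (x : ι → X) : Set ι :=
  {i | x i ∉ (span R (x '' Iio i)).topologicalClosure}

variable [WellFoundedLT ι]

theorem mem_topologicalClosure_span_newIndices (x : ι → X) (i : ι) :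
    x i ∈ (span R (x '' newIndices R x)).topologicalClosure := by
  induction i using WellFoundedLT.induction with
  | _ i ih =>
    by_cases hi : i ∈ newIndices R x
    · exact le_topologicalClosure _ (subset_span (mem_image_of_mem x hi))
    · refine topologicalClosure_minimal _ ?_ (isClosed_topologicalClosure _) (not_not.1 hi)
      exact span_le.2 (image_subset_iff.2 ih)

variable {R} in
theorem dense_span_image_newIndices {x : ι → X} (hx : Dense (range x)) :
    Dense (span R (x '' newIndices R x) : Set X) := by
  refine (hx.mono ?_).of_closure
  rw [range_subset_iff, ← topologicalClosure_coe]
  exact mem_topologicalClosure_span_newIndices R x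

end NewIndices

theorem le_mk_newIndices {X : Type u} [AddCommMonoid X] [Module ℝ X] [TopologicalSpace X]
    [ContinuousAdd X] [ContinuousSMul ℝ X] {ι : Type u} [LinearOrder ι] [WellFoundedLT ι]
    {x : ι → X} (hx : Dense (range x)) {κ : Cardinal.{u}} (hκ : ℵ₀ < κ)
    (hmin : ∀ D : Set X, Dense D → κ ≤ #D) : κ ≤ #(newIndices ℝ x) := by
  have hdense : Dense (ratCombinations (x '' newIndices ℝ x)) :=
    ((dense_span_image_newIndices hx).mono (span_subset_closure_ratCombinations _)).of_closure
  have hκ_le : κ ≤ max ℵ₀ #(newIndices ℝ x) :=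
    (hmin _ hdense).trans ((mk_ratCombinations_le _).trans (max_le_max le_rfl mk_image_le))
  exact (le_max_iff.1 hκ_le).resolve_left hκ.not_ge

section DualUnitBall

variable {X : Type*} [NormedAddCommGroup X] [NormedSpace ℝ X]

variable (X) in
def dualUnitBall : Set (WeakDual ℝ X) := {φ | ‖WeakDual.toStrongDual φ‖ ≤ 1}

theorem Submodule.exists_strongDual_norm_le_one_of_notMem {p : Submodule ℝ X}
    (hp : IsClosed (p : Set X)) {x : X} (hx : x ∉ p) :
    ∃ f : StrongDual ℝ X, ‖f‖ ≤ 1 ∧ (∀ y ∈ p, f y = 0) ∧ 0 < f x := by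
  obtain ⟨f, u, hfu, hux⟩ := geometric_hahn_banach_closed_point p.convex hp hx
  have hu : 0 < u := by simpa using hfu 0 p.zero_mem
  -- `f` is bounded above on the subspace `p`, hence vanishes on it
  have hf_zero : ∀ y ∈ p, f y = 0 := by
    intro y hy
    by_contra h
    have := hfu (((u + 1) / f y) • y) (p.smul_mem _ hy)
    rw [map_smul, smul_eq_mul, div_mul_cancel₀ _ h] at this
    linarith
  have hf : f ≠ 0 := by
    rintro rfl
    exact (hu.trans hux).ne' rfl
  refine ⟨‖f‖⁻¹ • f, (norm_smul_inv_norm hf).le, fun y hy => by simp [hf_zero y hy], ?_⟩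
  simpa using mul_pos (inv_pos.2 (norm_pos_iff.2 hf)) (hu.trans hux)

theorem hasStrictOpenChain_dualUnitBall_of_separated {ι : Type u} [LinearOrder ι]
    [WellFoundedLT ι] {κ : Cardinal.{u}} (hκ : κ ≤ #ι) (x : ι → X) (c : ι → ℝ)
    (φ : ι → StrongDual ℝ X) (hφ : ∀ i, ‖φ i‖ ≤ 1) (hlt : ∀ i, c i < φ i (x i))
    (hle : ∀ ⦃i j⦄, j < i → φ i (x j) ≤ c j) :
    HasStrictOpenChain (dualUnitBall X) κ.ord := by
  let V (j : ι) : Set (dualUnitBall X) := {ψ | c j < (ψ : WeakDual ℝ X) (x j)}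
  have hV (j : ι) : IsOpen (V j) :=
    isOpen_Ioi.preimage ((WeakDual.eval_continuous (x j)).comp continuous_subtype_val)
  let y (i : ι) : dualUnitBall X := ⟨StrongDual.toWeakDual (φ i), hφ i⟩
  exact hasStrictOpenChain_ord_of_strictMono hκ
    (fun i => isOpen_iUnion fun j => isOpen_iUnion fun _ => hV j)
    (strictMono_biUnion_Iio (y := y) (V := V) hlt fun i j hji => (hle hji).not_gt)

theorem hasStrictOpenChain_dualUnitBall_of_le_aleph0 [Nontrivial X] {κ : Cardinal.{u}}
    (hκ : κ ≤ ℵ₀) : HasStrictOpenChain (dualUnitBall X) κ.ord := by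
  obtain ⟨x₀, hx₀⟩ := exists_norm_eq X zero_le_one
  obtain ⟨g, hg, hgx₀⟩ := exists_dual_vector'' ℝ x₀
  replace hgx₀ : g x₀ = 1 := by simpa [hx₀] using hgx₀
  refine hasStrictOpenChain_dualUnitBall_of_separated (ι := ULift.{u} ℕ) (by simpa using hκ)
    (fun _ => x₀) (fun n => ((n.down : ℝ) + 2)⁻¹) (fun n => ((n.down : ℝ) + 1)⁻¹ • g)
    (fun n => ?_) (fun n => ?_) (fun i j hji => ?_)
  · rw [norm_smul, norm_inv, Real.norm_of_nonneg (by positivity)]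
    exact mul_le_one₀ (inv_le_one_of_one_le₀ (by simp)) (norm_nonneg _) hg
  · simp only [FunLike.coe_smul, Pi.smul_apply, hgx₀, smul_eq_mul, mul_one]
    exact inv_strictAnti₀ (by positivity) (by linarith)
  · have : (j.down : ℝ) + 1 ≤ i.down := by exact_mod_cast hji
    simp only [FunLike.coe_smul, Pi.smul_apply, hgx₀, smul_eq_mul, mul_one]
    exact inv_anti₀ (by positivity) (by linarith)

end DualUnitBall

theorem hasStrictOpenChain_dualUnitBall_of_aleph0_lt {X : Type u} [NormedAddCommGroup X]
    [NormedSpace ℝ X] {κ : Cardinal.{u}} (hκ : ℵ₀ < κ) (hmin : ∀ D : Set X, Dense D → κ ≤ #D) :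
    HasStrictOpenChain (dualUnitBall X) κ.ord := by
  obtain ⟨e⟩ : Nonempty ((#X).ord.ToType ≃ X) := Cardinal.eq.1 (mk_ord_toType _)
  have hT : κ ≤ #(newIndices ℝ e) := le_mk_newIndices (by simp [dense_univ]) hκ hmin
  choose φ hφ hφ_zero hφ_pos using fun i : newIndices ℝ e =>
    exists_strongDual_norm_le_one_of_notMem (isClosed_topologicalClosure _) i.2
  refine hasStrictOpenChain_dualUnitBall_of_separated hT (fun i => e i) 0 φ hφ hφ_pos
    fun i j hji => (hφ_zero i _ ?_).le
  exact le_topologicalClosure _ (subset_span (mem_image_of_mem e hji))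

theorem stmt8_general {X : Type*} [NormedAddCommGroup X] [NormedSpace ℝ X]
    (κ : Cardinal)
    (hmin : ∀ D : Set X, Dense D → κ ≤ Cardinal.mk D) :
    ∃ U : Ordinal → Set ({φ : WeakDual ℝ X | ‖WeakDual.toStrongDual φ‖ ≤ 1} : Set _),
      (∀ ξ < κ.ord, IsOpen (U ξ)) ∧
      (∀ ξ ζ : Ordinal, ξ < ζ → ζ < κ.ord → U ξ ⊂ U ζ) := by
  rcases lt_or_ge ℵ₀ κ with hκ | hκ
  · exact hasStrictOpenChain_dualUnitBall_of_aleph0_lt hκ hmin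
  rcases subsingleton_or_nontrivial X with hX | hX
  · have hκ_one : κ ≤ 1 := (hmin univ dense_univ).trans (by simpa [le_one_iff_subsingleton])
    exact hasStrictOpenChain_of_le_one (ord_le.2 (by simpa using hκ_one))
  · exact hasStrictOpenChain_dualUnitBall_of_le_aleph0 hκ

/-- If a Banach space `X` has density character `κ`, then the dual unit ball with the
weak* topology contains a strictly increasing well-ordered chain `(U_ξ)_{ξ<κ}` of open
sets. -/
theorem stmt8 {X : Type*} [NormedAddCommGroup X] [NormedSpace ℝ X] [CompleteSpace X]
    (κ : Cardinal)
    (hdense : ∃ D : Set X, Dense D ∧ Cardinal.mk D = κ)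
    (hmin : ∀ D : Set X, Dense D → κ ≤ Cardinal.mk D) :
    ∃ U : Ordinal → Set ({φ : WeakDual ℝ X | ‖WeakDual.toStrongDual φ‖ ≤ 1} : Set _),
      (∀ ξ < κ.ord, IsOpen (U ξ)) ∧
      (∀ ξ ζ : Ordinal, ξ < ζ → ζ < κ.ord → U ξ ⊂ U ζ) :=
  stmt8_general κ hmin
end

section
/- If a Boolean algebra B contains no strictly increasing chain of order type ω₁, then its Stone space cannot be continuously mapped onto the ordinal space [0, ω₁] with the order topology. -/
/-!
If `f : K_B → [0, ω₁]` is a continuous surjection, the sets `f⁻¹[0, α]` are clopen because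
`[0, α] = [0, α + 1)` is both closed and open in the order topology, and they increase strictly in
`α` since every ordinal `≤ ω₁` is a value of `f`. Transported to `B`, the sets with `α < ω₁`
form a strictly increasing chain of order type `ω₁`.
-/

open Cardinal Ordinal TopologicalSpace Set

theorem isClopen_Iic {α : Type*} [LinearOrder α] [TopologicalSpace α] [OrderClosedTopology α]
    [SuccOrder α] [NoMaxOrder α] (a : α) : IsClopen (Iic a) :=
  ⟨isClosed_Iic, Order.Iio_succ a ▸ isOpen_Iio⟩

namespace TopologicalSpace.Clopens

variable {X α : Type*} [TopologicalSpace X] [LinearOrder α] [TopologicalSpace α]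
  [OrderClosedTopology α] [SuccOrder α] [NoMaxOrder α] {f : X → α}

def preimageIic (hf : Continuous f) (a : α) : Clopens X :=
  ⟨f ⁻¹' Iic a, (isClopen_Iic a).preimage hf⟩

theorem preimageIic_lt_preimageIic (hf : Continuous f) {a b : α} (hab : a < b)
    (hb : b ∈ range f) : preimageIic hf a < preimageIic hf b := by
  obtain ⟨x, rfl⟩ := hb
  refine SetLike.lt_iff_le_and_exists.2 ⟨fun y hy => le_trans hy hab.le, x, le_rfl, ?_⟩
  exact hab.not_ge

end TopologicalSpace.Clopens

namespace Ordinal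

universe u v

/-- Needed because the ordinals indexing a chain and the values of `f` may live in different
universes. -/
noncomputable def iioOrderIsoOfLiftEq {o : Ordinal.{u}} {o' : Ordinal.{v}}
    (h : lift.{v} o = lift.{u} o') : Iio o ≃o Iio o' :=
  have : Nonempty (@LT.lt o.ToType _ ≃r @LT.lt o'.ToType _) :=
    lift_type_eq.{u, v, 0}.1 (by rwa [type_toType, type_toType])
  ToType.mk.trans ((OrderIso.ofRelIsoLT this.some).trans ToType.mk.symm)

theorem lift_omega_one : lift.{v} (ω₁ : Ordinal.{u}) = lift.{u} (ω₁ : Ordinal.{v}) := by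
  simp

theorem exists_strictMonoOn_Iio_of_strictMono {β : Type*} [Preorder β] [Bot β] {o : Ordinal}
    {c : Iio o → β} (hc : StrictMono c) : ∃ b : Ordinal → β, StrictMonoOn b (Iio o) :=
  ⟨fun α => if h : α < o then c ⟨α, h⟩ else ⊥, fun α hα γ hγ hαγ => by
    simp only [dif_pos (show α < o from hα), dif_pos (show γ < o from hγ)]
    exact hc hαγ⟩

end Ordinal

theorem stmt13_general (B : Type*) [BooleanAlgebra B]
    (hchain : ¬ ∃ b : Ordinal → B,
      ∀ α β : Ordinal, α < β → β < (aleph 1).ord → b α < b β)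
    (K_B : Type*) [TopologicalSpace K_B] (iso : Clopens K_B ≃o B) :
    ¬ ∃ f : K_B → Ordinal, Continuous f ∧ Set.range f = Set.Iic (aleph 1).ord := by
  rintro ⟨f, hf, hrange⟩
  rw [ord_aleph] at hchain hrange
  let e := iioOrderIsoOfLiftEq lift_omega_one
  let chain : Iio ω₁ → B := fun α => iso (Clopens.preimageIic hf (e α))
  have hchain_strictMono : StrictMono chain := fun α β hαβ =>
    iso.strictMono <| Clopens.preimageIic_lt_preimageIic hf (e.strictMono hαβ)
      (hrange ▸ Iio_subset_Iic_self (e β).2)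
  obtain ⟨b, hb⟩ := exists_strictMonoOn_Iio_of_strictMono hchain_strictMono
  exact hchain ⟨b, fun α β hαβ hβ => hb (hαβ.trans hβ) hβ hαβ⟩

/-- If a Boolean algebra `B` (with Stone space `K_B`) has no strictly increasing chain
of order type ω₁, then `K_B` admits no continuous surjection onto the ordinal interval
`[0, ω₁]` with the order topology. -/
theorem stmt13 (B : Type*) [BooleanAlgebra B]
    (hchain : ¬ ∃ b : Ordinal → B,
      ∀ α β : Ordinal, α < β → β < (aleph 1).ord → b α < b β)
    (K_B : Type*) [TopologicalSpace K_B] [CompactSpace K_B] [T2Space K_B]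
    [TotallyDisconnectedSpace K_B] (iso : Clopens K_B ≃o B) :
    ¬ ∃ f : K_B → Ordinal, Continuous f ∧ Set.range f = Set.Iic (aleph 1).ord :=
  stmt13_general B hchain K_B iso
end

section
/- If K_A is the Stone space of a countable Boolean algebra A and C(K_A) is isometrically universal for all separable Banach spaces, then K_A is not scattered; consequently A contains a free (independent) subalgebra on countably infinitely many generators. -/
open TopologicalSpace

/-!
If `C(K)` contains an isometric copy of the Euclidean plane, then for every direction `v` the
point `x` where `|T v|` peaks has `T · x = ⟪g x, ·⟫` with `g x` parallel to `v`, by the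
equality case of Cauchy–Schwarz. So the lines `ℝ ∙ g x` cover the plane, and by Baire's theorem
`K` cannot be countable. A countable Boolean algebra has a second countable Stone space, so
`K_A` is an uncountable Polish space: it contains a nonempty perfect set (hence is not
scattered) and a copy of the Cantor set `ℕ → Bool`. Separating the two halves
`{b | b n = true}` and `{b | b n = false}` of the Cantor set by clopen sets gives an
independent sequence in `A`.
-/

def IsScatteredSpace (X : Type*) [TopologicalSpace X] : Prop :=
  ∀ S : Set X, S.Nonempty → ∃ x ∈ S, ∃ U : Set X, IsOpen U ∧ U ∩ S = {x}

def IsBooleanIndependent {ι B : Type*} [BooleanAlgebra B] (f : ι → B) : Prop :=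
  ∀ s t : Finset ι, Disjoint s t → s.inf f ⊓ t.inf (fun i => (f i)ᶜ) ≠ ⊥

lemma IsBooleanIndependent.orderIso_comp {ι B C : Type*} [BooleanAlgebra B] [BooleanAlgebra C]
    {f : ι → B} (hf : IsBooleanIndependent f) (e : B ≃o C) : IsBooleanIndependent (e ∘ f) := by
  intro s t hst h
  apply hf s t hst
  rw [← map_eq_bot_iff e, map_inf, map_finset_inf, map_finset_inf]
  simpa only [Function.comp_def, map_compl'] using h

section LinearIsometryIntoContinuousFunctions

variable {E K : Type*} [NormedAddCommGroup E] [InnerProductSpace ℝ E] [CompleteSpace E]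
  [TopologicalSpace K] [CompactSpace K]

open InnerProductSpace in
lemma LinearIsometry.exists_forall_mem_span_singleton [Nonempty K] (T : E →ₗᵢ[ℝ] C(K, ℝ)) :
    ∃ g : K → E, ∀ v : E, ∃ x, v ∈ ℝ ∙ g x := by
  let φ (x : K) : StrongDual ℝ E := (ContinuousMap.evalCLM ℝ x).comp T.toContinuousLinearMap
  refine ⟨fun x => (toDual ℝ E).symm (φ x), fun v => ?_⟩
  rcases eq_or_ne v 0 with rfl | hv
  · exact ⟨Classical.arbitrary K, Submodule.zero_mem _⟩
  obtain ⟨x, hx⟩ : ∃ x, ‖T v‖ ≤ |T v x| := by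
    simpa using (ContinuousMap.norm_lt_iff_of_nonempty (f := T v)).not.mp (lt_irrefl _)
  set g := (toDual ℝ E).symm (φ x)
  have hTv : T v x = ⟪g, v⟫_ℝ := by simp [g, φ]
  have hg : ‖g‖ ≤ 1 := by
    rw [LinearIsometryEquiv.norm_map]
    refine ContinuousLinearMap.opNorm_le_bound _ zero_le_one fun w => ?_
    simpa [φ] using (T w).norm_coe_le_norm x
  have hcs : |⟪g, v⟫_ℝ| = ‖g‖ * ‖v‖ := by
    refine le_antisymm (abs_real_inner_le_norm g v) ?_
    calc ‖g‖ * ‖v‖ ≤ ‖T v‖ := by rw [T.norm_map]; exact mul_le_of_le_one_left (norm_nonneg v) hg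
      _ ≤ |⟪g, v⟫_ℝ| := hTv ▸ hx
  have hg0 : g ≠ 0 := by
    intro hg0
    rw [hTv, hg0, inner_zero_left, abs_zero, T.norm_map] at hx
    exact hv (norm_le_zero_iff.mp hx)
  obtain ⟨r, -, rfl⟩ := (norm_inner_eq_norm_iff (𝕜 := ℝ) hg0 hv).mp hcs
  exact ⟨x, Submodule.smul_mem _ r (Submodule.mem_span_singleton_self g)⟩

lemma LinearIsometry.exists_span_singleton_eq_top [Countable K] (T : E →ₗᵢ[ℝ] C(K, ℝ)) :
    ∃ v : E, ℝ ∙ v = ⊤ := by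
  rcases isEmpty_or_nonempty K with _ | _
  · have : Subsingleton E := T.injective.subsingleton
    exact ⟨0, Subsingleton.elim _ _⟩
  obtain ⟨g, hg⟩ := T.exists_forall_mem_span_singleton
  -- Baire: countably many closed lines cover `E`, so one of them has interior
  obtain ⟨x, hx⟩ := nonempty_interior_of_iUnion_of_closed
    (fun x => Submodule.closed_of_finiteDimensional (ℝ ∙ g x))
    (Set.eq_univ_of_forall fun v => Set.mem_iUnion.mpr (hg v))
  exact ⟨g x, Submodule.eq_top_of_nonempty_interior' _ hx⟩

lemma LinearIsometry.uncountable_of_one_lt_rank (hE : 1 < Module.rank ℝ E)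
    (T : E →ₗᵢ[ℝ] C(K, ℝ)) : Uncountable K := by
  by_contra hK
  have : Countable K := not_uncountable_iff.mp hK
  obtain ⟨v, hv⟩ := T.exists_span_singleton_eq_top
  have := rank_span_le (R := ℝ) ({v} : Set E)
  rw [hv, rank_top, Cardinal.mk_singleton] at this
  exact (hE.trans_le this).false

end LinearIsometryIntoContinuousFunctions

section Topology

variable {X : Type*} [TopologicalSpace X]

lemma TopologicalSpace.Clopens.mem_finset_inf {ι : Type*} {W : ι → Clopens X} {s : Finset ι}
    {x : X} : x ∈ s.inf W ↔ ∀ i ∈ s, x ∈ W i := by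
  induction s using Finset.cons_induction with
  | empty => simp [← SetLike.mem_coe]
  | cons i s hi ih =>
    rw [Finset.inf_cons, ← SetLike.mem_coe, Clopens.coe_inf, Set.mem_inter_iff, SetLike.mem_coe,
      SetLike.mem_coe, ih, Finset.forall_mem_cons]

lemma TopologicalSpace.Clopens.isBooleanIndependent_of_forall_exists_mem {ι : Type*}
    {W : ι → Clopens X}
    (h : ∀ s t : Finset ι, Disjoint s t → ∃ x, (∀ i ∈ s, x ∈ W i) ∧ ∀ i ∈ t, x ∉ W i) :
    IsBooleanIndependent W := by
  intro s t hst hbot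
  obtain ⟨x, hs, ht⟩ := h s t hst
  have : x ∈ s.inf W ⊓ t.inf fun i => (W i)ᶜ :=
    ⟨Clopens.mem_finset_inf.mpr hs, Clopens.mem_finset_inf.mpr fun i hi => ht i hi⟩
  simp [hbot, ← SetLike.mem_coe] at this

lemma secondCountableTopology_of_countable_clopens [CompactSpace X] [T2Space X]
    [TotallyDisconnectedSpace X] [Countable (Clopens X)] : SecondCountableTopology X := by
  refine isTopologicalBasis_isClopen.secondCountableTopology ?_
  convert Set.countable_range ((↑) : Clopens X → Set X)
  ext s
  exact ⟨fun hs => ⟨⟨s, hs⟩, rfl⟩, by rintro ⟨V, rfl⟩; exact V.isClopen⟩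

lemma Perfect.not_isScatteredSpace {D : Set X} (hD : Perfect D) (hne : D.Nonempty) :
    ¬ IsScatteredSpace X := by
  intro h
  obtain ⟨x, hxD, U, hU, hUD⟩ := h D hne
  have hxU : x ∈ U := (hUD.ge (Set.mem_singleton x)).1
  obtain ⟨y, hy, hyx⟩ := preperfect_iff_nhds.mp hD.acc x hxD U (hU.mem_nhds hxU)
  rw [hUD] at hy
  exact hyx hy

lemma not_isScatteredSpace_of_uncountable [SecondCountableTopology X] [Uncountable X] :
    ¬ IsScatteredSpace X := by
  obtain ⟨D, hD, hne, -⟩ := exists_perfect_nonempty_of_isClosed_of_not_countable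
    (isClosed_univ (X := X)) Set.not_countable_univ
  exact hD.not_isScatteredSpace hne

lemma Continuous.exists_isBooleanIndependent_clopens [CompactSpace X] [T2Space X]
    [TotallyDisconnectedSpace X] {ι : Type*} {f : (ι → Bool) → X} (hf : Continuous f)
    (hinj : Function.Injective f) : ∃ W : ι → Clopens X, IsBooleanIndependent W := by
  classical
  let Z (i : ι) (v : Bool) : Set X := f '' {b | b i = v}
  have hZ (i : ι) (v : Bool) : IsClosed (Z i v) :=
    ((isClosed_eq (continuous_apply i) continuous_const).isCompact.image hf).isClosed
  have hZZ (i : ι) : Z i true ⊆ (Z i false)ᶜ := by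
    rw [Set.subset_compl_iff_disjoint_right, Set.disjoint_image_iff hinj, Set.disjoint_left]
    intro b hb hb'
    simp_all
  choose C hC hZC hCZ using fun i =>
    exists_clopen_of_closed_subset_open (hZ i true) (hZ i false).isOpen_compl (hZZ i)
  refine ⟨fun i => ⟨C i, hC i⟩, Clopens.isBooleanIndependent_of_forall_exists_mem
    fun s t hst => ⟨f fun i => decide (i ∈ s), fun i hi => hZC i ⟨_, by simpa using hi, rfl⟩,
      fun i hi hx => hCZ i hx ⟨_, by simpa using Finset.disjoint_right.mp hst hi, rfl⟩⟩⟩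

lemma exists_isBooleanIndependent_clopens [CompactSpace X] [T2Space X]
    [TotallyDisconnectedSpace X] [SecondCountableTopology X] [Uncountable X] :
    ∃ W : ℕ → Clopens X, IsBooleanIndependent W := by
  let := metrizableSpaceMetric X
  obtain ⟨f, -, hf, hinj⟩ :=
    isClosed_univ.exists_nat_bool_injection_of_not_countable (Set.not_countable_univ (α := X))
  exact hf.exists_isBooleanIndependent_clopens hinj

end Topology

/-- A countable Boolean algebra `A` with Stone space `K_A` such that `C(K_A)` is
isometrically universal for separable Banach spaces: then `K_A` is not scattered, and
`A` contains an independent family indexed by `ℕ` (i.e. a free subalgebra on countably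
infinitely many generators). -/
theorem stmt14 (A : Type) [BooleanAlgebra A] [Countable A]
    (K_A : Type) [TopologicalSpace K_A] [CompactSpace K_A] [T2Space K_A]
    [TotallyDisconnectedSpace K_A] (iso : Clopens K_A ≃o A)
    (huniv : ∀ (Y : Type) [NormedAddCommGroup Y] [NormedSpace ℝ Y] [CompleteSpace Y]
      [SeparableSpace Y], Nonempty (Y →ₗᵢ[ℝ] C(K_A, ℝ))) :
    (¬ ∀ S : Set K_A, S.Nonempty → ∃ x ∈ S, ∃ U : Set K_A, IsOpen U ∧ U ∩ S = {x}) ∧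
    (∃ f : ℕ → A, ∀ s t : Finset ℕ, Disjoint s t →
      (s.inf f) ⊓ (t.inf fun i => (f i)ᶜ) ≠ ⊥) := by
  have : Countable (Clopens K_A) := Countable.of_equiv A iso.symm.toEquiv
  have : SecondCountableTopology K_A := secondCountableTopology_of_countable_clopens
  obtain ⟨T⟩ := huniv (EuclideanSpace ℝ (Fin 2))
  have : Uncountable K_A := T.uncountable_of_one_lt_rank <| by
    rw [← Module.finrank_eq_rank, finrank_euclideanSpace_fin]
    norm_num
  obtain ⟨W, hW⟩ := exists_isBooleanIndependent_clopens (X := K_A)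
  exact ⟨not_isScatteredSpace_of_uncountable, iso ∘ W, hW.orderIso_comp iso⟩
end
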